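/- Let (A, (·,·), R) be a locally finite root supersystem over a field F of characteristic zero. Since the form is nondegenerate, A is torsion-free; identify A with its image in F ⊗_ℤ A. If δ ∈ R_ns is nonzero and k ∈ F is a scalar such that k·δ lies in (the image of) R, then k ∈ {0, 1, −1}. -/

import Mathlib

open Pointwise

/-- A symmetric biadditive form with values in `F`. -/
structure IsSymForm {F : Type*} [Field F] {A : Type*} [AddCommGroup A]
    (form : A → A → F) : Prop where
  symm : ∀ a b, form a b = form b a
  add_left : ∀ a b c, form (a + b) c = form a c + form b c

/-- The radical `A⁰` of a form. -/
def formRadical {F : Type*} [Field F] {A : Type*} [AddCommGroup A]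
    (form : A → A → F) : Set A := {a | ∀ b, form a b = 0}

/-- The set of real roots `R_re = {α ∈ R | (α,α) ≠ 0} ∪ {0}`. -/
def reRoots {F : Type*} [Field F] {A : Type*} [AddCommGroup A]
    (form : A → A → F) (R : Set A) : Set A :=
  {α | α ∈ R ∧ form α α ≠ 0} ∪ {0}

/-- The set of nonsingular roots `R_ns = {α ∈ R \ A⁰ | (α,α) = 0} ∪ {0}`. -/
def nsRoots {F : Type*} [Field F] {A : Type*} [AddCommGroup A]
    (form : A → A → F) (R : Set A) : Set A :=
  {α | α ∈ R ∧ form α α = 0 ∧ α ∉ formRadical form} ∪ {0}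

/-- Extended affine root supersystem. -/
structure IsEARS {F : Type*} [Field F] [CharZero F] {A : Type*} [AddCommGroup A]
    (form : A → A → F) (R : Set A) extends IsSymForm form : Prop where
  zero_mem : (0 : A) ∈ R
  closure_eq_top : AddSubgroup.closure R = ⊤
  neg_mem : ∀ α ∈ R, -α ∈ R
  cartan : ∀ α ∈ R, form α α ≠ 0 → ∀ β ∈ R, ∃ k : ℤ, 2 * form α β = (k : F) * form α α
  string : ∀ α ∈ R, form α α ≠ 0 → ∀ β ∈ R, ∃ p q : ℕ,
      2 * form β α = ((p : F) - (q : F)) * form α α ∧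
      (∀ k : ℤ, β + k • α ∈ R ↔ -(p : ℤ) ≤ k ∧ k ≤ (q : ℤ))
  ns_string : ∀ α ∈ R, form α α = 0 → ∀ β ∈ R, form α β ≠ 0 →
      (β - α ∈ R ∨ β + α ∈ R)

/-- Locally finite root supersystem: an EARS with nondegenerate form. -/
def IsLFRSS {F : Type*} [Field F] [CharZero F] {A : Type*} [AddCommGroup A]
    (form : A → A → F) (R : Set A) : Prop :=
  IsEARS form R ∧ ∀ a : A, (∀ b, form a b = 0) → a = 0

/-- `α` and `β` are connected in `X` by a finite chain with consecutive
elements non-orthogonal. -/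
def ConnectedIn {F : Type*} [Field F] {A : Type*} [AddCommGroup A]
    (form : A → A → F) (X : Set A) (α β : A) : Prop :=
  ∃ (n : ℕ) (c : Fin (n + 1) → A), (∀ i, c i ∈ X) ∧ c 0 = α ∧ c (Fin.last n) = β ∧
    ∀ i : Fin n, form (c i.castSucc) (c i.succ) ≠ 0

/-- A connected subset. -/
def IsConnectedSet {F : Type*} [Field F] {A : Type*} [AddCommGroup A]
    (form : A → A → F) (X : Set A) : Prop :=
  ∀ α ∈ X, ∀ β ∈ X, ConnectedIn form X α β

/-- Irreducibility: `R_re ≠ {0}` and `R \ R⁰` is connected. -/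
def IsIrreducibleRSS {F : Type*} [Field F] {A : Type*} [AddCommGroup A]
    (form : A → A → F) (R : Set A) : Prop :=
  reRoots form R ≠ {0} ∧ IsConnectedSet form (R \ formRadical form)

/-- Sub-supersystem of a locally finite root supersystem. -/
def IsSubSupersystem {F : Type*} [Field F] {A : Type*} [AddCommGroup A]
    (form : A → A → F) (R S : Set A) : Prop :=
  S ⊆ R ∧
  (∀ a ∈ AddSubgroup.closure S, (∀ b ∈ AddSubgroup.closure S, form a b = 0) → a = 0) ∧
  (0 : A) ∈ S ∧
  (∀ α ∈ S, form α α ≠ 0 → ∀ β ∈ S, ∀ k : ℤ,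
      2 * form β α = (k : F) * form α α → β - k • α ∈ S) ∧
  (∀ γ ∈ S, form γ γ = 0 → ∀ β ∈ S, form β γ ≠ 0 → (γ - β ∈ S ∨ γ + β ∈ S))

/-- `Π` is an integral base of `R` (a `ℤ`-basis of the group generated by `R`). -/
def IsIntegralBase {F : Type*} [Field F] {A : Type*} [AddCommGroup A]
    (form : A → A → F) (R P : Set A) : Prop :=
  P ⊆ R ∧ LinearIndependent ℤ (fun p : P => (p : A)) ∧
    Submodule.span ℤ P = Submodule.span ℤ R

/-- `Π` is a base of `R`. -/
def IsBase {F : Type*} [Field F] {A : Type*} [AddCommGroup A]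
    (form : A → A → F) (R P : Set A) : Prop :=
  IsIntegralBase form R P ∧
  ∀ α ∈ R \ formRadical form, ∃ (n : ℕ) (a : Fin n → A) (r : Fin n → ℤ),
    (∀ i, a i ∈ P) ∧ (∀ i, r i = 1 ∨ r i = -1) ∧
    α = ∑ i, r i • a i ∧
    ∀ t : Fin n, (∑ i ∈ Finset.Iic t, r i • a i) ∈ R \ formRadical form

/-!
Write `α = k δ` in `F ⊗ A`, so that `(α, ·) = k (δ, ·)`; in particular `α` is isotropic and
orthogonal to `δ`. Since `δ` is not in the radical and `R` generates `A`, some root is not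
orthogonal to `δ`, and reflecting `δ` in it if necessary gives an isotropic root `γ` with
`(δ, γ) ≠ 0`. For isotropic roots `δ, γ` with `(δ, γ) ≠ 0`, one of `γ ± δ` is a real root whose
Cartan integers force `(α, γ) / (δ, γ) ∈ ℤ` for every root `α ⊥ δ`. Applied to the pairs `(δ, α)`
and `(α, δ)` this makes both `k` and `1 / k` integers.
-/

open TensorProduct

namespace IsSymForm

variable {F : Type*} [Field F] {A : Type*} [AddCommGroup A] {form : A → A → F}

def leftHom (hf : IsSymForm form) (x : A) : A →+ F :=
  AddMonoidHom.mk' (form · x) (fun a b => hf.add_left a b x)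

@[simp]
theorem leftHom_apply (hf : IsSymForm form) (x a : A) : hf.leftHom x a = form a x := rfl

theorem add_right (hf : IsSymForm form) (a b c : A) :
    form a (b + c) = form a b + form a c := by
  rw [hf.symm, hf.add_left, hf.symm b, hf.symm c]

theorem zsmul_left (hf : IsSymForm form) (n : ℤ) (a x : A) :
    form (n • a) x = n * form a x := by
  simpa [zsmul_eq_mul] using map_zsmul (hf.leftHom x) n a

theorem zsmul_right (hf : IsSymForm form) (n : ℤ) (a x : A) :
    form x (n • a) = n * form x a := by
  rw [hf.symm, hf.zsmul_left, hf.symm a]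

theorem form_eq_mul_of_smul_one_tmul_eq (hf : IsSymForm form) {α δ : A} {k : F}
    (h : k • ((1 : F) ⊗ₜ[ℤ] δ) = (1 : F) ⊗ₜ[ℤ] α) (x : A) :
    form α x = k * form δ x := by
  simpa using (congrArg ((hf.leftHom x).toIntLinearMap.liftBaseChange F) h).symm

theorem exists_mem_form_ne_zero (hf : IsSymForm form) {R : Set A}
    (hR : AddSubgroup.closure R = ⊤) {δ : A} (hδ : δ ∉ formRadical form) :
    ∃ β ∈ R, form δ β ≠ 0 := by
  by_contra! hR0
  refine hδ fun b => ?_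
  have hb : b ∈ AddSubgroup.closure R := hR ▸ AddSubgroup.mem_top b
  induction hb using AddSubgroup.closure_induction with
  | mem x hx => exact hR0 x hx
  | zero => simpa using hf.zsmul_right 0 0 δ
  | add x y _ _ hx hy => rw [hf.add_right, hx, hy, add_zero]
  | neg x _ hx => rw [← neg_one_zsmul, hf.zsmul_right, hx, mul_zero]

end IsSymForm

namespace IsEARS

variable {F : Type*} [Field F] [CharZero F] {A : Type*} [AddCommGroup A]
  {form : A → A → F} {R : Set A}

theorem exists_isotropic_mem_form_ne_zero (hR : IsEARS form R) {δ : A} (hδ : δ ∈ R)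
    (hδδ : form δ δ = 0) (hδrad : δ ∉ formRadical form) :
    ∃ γ ∈ R, form γ γ = 0 ∧ form δ γ ≠ 0 := by
  obtain ⟨β, hβ, hδβ⟩ := hR.exists_mem_form_ne_zero hR.closure_eq_top hδrad
  by_cases hββ : form β β = 0
  · exact ⟨β, hβ, hββ, hδβ⟩
  -- the reflection of `δ` in the real root `β`
  obtain ⟨p, q, hpq, hstring⟩ := hR.string β hβ hββ δ hδ
  have hqp : (q : F) - p ≠ 0 := by
    intro hqp
    apply hδβ
    have : 2 * form δ β = 0 := by rw [hpq]; linear_combination (-form β β) * hqp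
    simpa using this
  refine ⟨δ + ((q : ℤ) - p) • β, (hstring _).mpr ⟨by omega, by omega⟩, ?_, ?_⟩
  · simp only [hR.add_left, hR.add_right, hR.zsmul_left, hR.zsmul_right]
    push_cast
    linear_combination hδδ + ((q : F) - p) * hR.symm β δ + ((q : F) - p) * hpq
  · simp only [hR.add_right, hR.zsmul_right, hδδ, zero_add]
    push_cast
    exact mul_ne_zero hqp hδβ

theorem exists_int_form_eq_mul (hR : IsEARS form R) {δ γ α : A} (hδ : δ ∈ R) (hγ : γ ∈ R)
    (hα : α ∈ R) (hδδ : form δ δ = 0) (hγγ : form γ γ = 0) (hδγ : form δ γ ≠ 0)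
    (hδα : form δ α = 0) :
    ∃ m : ℤ, form α γ = m * form δ γ := by
  obtain ⟨s, hs, hη⟩ : ∃ s : ℤ, (s = 1 ∨ s = -1) ∧ γ + s • δ ∈ R := by
    rcases hR.ns_string δ hδ hδδ γ hγ hδγ with h | h
    · exact ⟨-1, Or.inr rfl, by simpa [sub_eq_add_neg] using h⟩
    · exact ⟨1, Or.inl rfl, by simpa using h⟩
  have hs0 : (s : F) ≠ 0 := by rcases hs with rfl | rfl <;> norm_num
  have hηη : form (γ + s • δ) (γ + s • δ) = 2 * s * form δ γ := by
    simp only [hR.add_left, hR.add_right, hR.zsmul_left, hR.zsmul_right]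
    linear_combination hγγ + (s : F) * hR.symm γ δ + (s : F) * s * hδδ
  have hηα : form (γ + s • δ) α = form α γ := by
    simp only [hR.add_left, hR.zsmul_left, hδα, mul_zero, add_zero]
    exact hR.symm γ α
  have hηη0 : form (γ + s • δ) (γ + s • δ) ≠ 0 := by
    rw [hηη]; exact mul_ne_zero (mul_ne_zero two_ne_zero hs0) hδγ
  obtain ⟨n, hn⟩ := hR.cartan _ hη hηη0 α hα
  rw [hηα, hηη] at hn
  exact ⟨n * s, by push_cast; linear_combination hn / 2⟩

end IsEARS

theorem stmt15 {F : Type*} [Field F] [CharZero F] {A : Type*} [AddCommGroup A]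
    (form : A → A → F) (R : Set A) (h : IsLFRSS form R)
    (δ : A) (hδ : δ ∈ nsRoots form R) (hδ0 : δ ≠ 0) (k : F)
    (hk : ∃ α ∈ R, k • ((1 : F) ⊗ₜ[ℤ] δ : F ⊗[ℤ] A) = (1 : F) ⊗ₜ[ℤ] α) :
    k = 0 ∨ k = 1 ∨ k = -1 := by
  obtain ⟨hR, -⟩ := h
  obtain ⟨α, hα, hαkδ⟩ := hk
  have hform := hR.form_eq_mul_of_smul_one_tmul_eq hαkδ
  obtain ⟨hδR, hδδ, hδrad⟩ := hδ.resolve_right hδ0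
  by_cases hk0 : k = 0
  · exact Or.inl hk0
  obtain ⟨γ, hγ, hγγ, hδγ⟩ := hR.exists_isotropic_mem_form_ne_zero hδR hδδ hδrad
  have hαδ : form α δ = 0 := by rw [hform, hδδ, mul_zero]
  have hαα : form α α = 0 := by rw [hform, hR.symm, hαδ, mul_zero]
  have hαγ : form α γ ≠ 0 := by rw [hform]; exact mul_ne_zero hk0 hδγ
  obtain ⟨m, hm⟩ := hR.exists_int_form_eq_mul hδR hγ hα hδδ hγγ hδγ (by rw [hR.symm, hαδ])
  obtain ⟨m', hm'⟩ := hR.exists_int_form_eq_mul hα hγ hδR hαα hγγ hαγ hαδ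
  have hkm : k = m := mul_right_cancel₀ hδγ (by rw [← hform, hm])
  have hmm' : m * m' = 1 := by
    have : (m : F) * m' * form δ γ = 1 * form δ γ := by
      rw [← hkm]
      linear_combination -hm' - m' * hform γ
    exact_mod_cast mul_right_cancel₀ hδγ this
  right
  rcases Int.eq_one_or_neg_one_of_mul_eq_one hmm' with h1 | h1 <;> simp [hkm, h1]
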